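/- arXiv:1209.6371 — 4 statements merged into one kernel-verified Lean document; each statement's English description precedes it below -/
import Mathlib

section
/- The four syzygy identities YP - ZR - TS = 0, (X - bT)P + aTR - ZS = 0, -cTP + (X + bT)R - YS = 0, and (cZ - bY)P + (aY - bZ)R + XS = 0 hold modulo F, where P = Z^2 + aT^2, R = ZY - T(X-bT), S = Z(X-bT) + aTY and F = X^2 + (ac-b^2)T^2 + aY^2 - 2bYZ + cZ^2. (The first two hold identically; the last two hold in ℂ[X,Y,Z,T,a,b,c]/(F).) -/
/-- The four syzygy identities
`YP - ZR - TS = 0`, `(X-bT)P + aTR - ZS = 0`,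
`-cTP + (X+bT)R - YS = 0`, `(cZ-bY)P + (aY-bZ)R + XS = 0`
hold modulo `F = X² + (ac-b²)T² + aY² - 2bYZ + cZ²`, where
`P = Z² + aT²`, `R = ZY - T(X-bT)`, `S = Z(X-bT) + aTY`. -/
theorem stmt3 :
    let X : MvPolynomial (Fin 7) ℂ := MvPolynomial.X 0
    let Y : MvPolynomial (Fin 7) ℂ := MvPolynomial.X 1
    let Z : MvPolynomial (Fin 7) ℂ := MvPolynomial.X 2
    let T : MvPolynomial (Fin 7) ℂ := MvPolynomial.X 3
    let a : MvPolynomial (Fin 7) ℂ := MvPolynomial.X 4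
    let b : MvPolynomial (Fin 7) ℂ := MvPolynomial.X 5
    let c : MvPolynomial (Fin 7) ℂ := MvPolynomial.X 6
    let P := Z^2 + a*T^2
    let R := Z*Y - T*(X - b*T)
    let S := Z*(X - b*T) + a*T*Y
    let F := X^2 + (a*c - b^2)*T^2 + a*Y^2 - 2*b*Y*Z + c*Z^2
    (F ∣ (Y*P - Z*R - T*S)) ∧
    (F ∣ ((X - b*T)*P + a*T*R - Z*S)) ∧
    (F ∣ (-(c*T)*P + (X + b*T)*R - Y*S)) ∧
    (F ∣ ((c*Z - b*Y)*P + (a*Y - b*Z)*R + X*S)) := by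
  intro X Y Z T a b c P R S F
  exact ⟨⟨0, by ring⟩, ⟨0, by ring⟩, ⟨-T, by ring⟩, ⟨Z, by ring⟩⟩
end

section
/- Substituting x = (y+β₂)S - (z+β₁)γ₃P - β₂γ₃ and z = (y+β₂)P - γ₃S + β₄ into F = x² - (z²+zβ₁+β₂²)γ₃² + z(y+β₂)² - 2β₂(y+β₂)(z-β₄) - (z+β₁)(z-β₄)², the vanishing of S² - (y+β₂)P³ - (β₁+β₄-γ₃S)P² + (y-β₂)P + β₄ - γ₃S implies F = 0. -/
/-- Substituting `x = (y+β₂)S - (z+β₁)γ₃P - β₂γ₃` and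
`z = (y+β₂)P - γ₃S + β₄` into
`F = x² - (z²+zβ₁+β₂²)γ₃² + z(y+β₂)² - 2β₂(y+β₂)(z-β₄) - (z+β₁)(z-β₄)²`:
the vanishing of `S² - (y+β₂)P³ - (β₁+β₄-γ₃S)P² + (y-β₂)P + β₄ - γ₃S`
implies `F = 0` under these substitutions. -/
theorem stmt10 (y S P β₁ β₂ γ₃ β₄ : ℂ)
    (h : S^2 - (y + β₂)*P^3 - (β₁ + β₄ - γ₃*S)*P^2 + (y - β₂)*P + β₄ - γ₃*S = 0) :
    let z := (y + β₂)*P - γ₃*S + β₄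
    let x := (y + β₂)*S - (z + β₁)*γ₃*P - β₂*γ₃
    x^2 - (z^2 + z*β₁ + β₂^2)*γ₃^2 + z*(y + β₂)^2
      - 2*β₂*(y + β₂)*(z - β₄) - (z + β₁)*(z - β₄)^2 = 0 := by
  intro z x
  simp only [z, x]
  linear_combination (-γ₃^2*β₄ + β₂^2 - β₁*γ₃^2 - P*β₂*γ₃^2 + S*γ₃^3 + 2*y*β₂ - y*P*γ₃^2 + y^2) * h
end

section
/- For every k ≥ 1, m > k+1 and ε ∈ ℂ, any common zero (x,y,z,t) of h = x² + (t+z)y² + (t-z)z² - (t²-z²)t^{2k} + εt^{2m} and its four partial derivatives with z + t = 0 must satisfy t = z = y = x = 0. -/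
/-- For `k ≥ 1`, `m > k+1`, `ε ∈ ℂ`, any common zero of
`h = x² + (t+z)y² + (t-z)z² - (t²-z²)t^{2k} + εt^{2m}` and its four partial
derivatives with `z + t = 0` satisfies `t = z = y = x = 0`. -/
theorem stmt11 (k m : ℕ) (hk : 1 ≤ k) (hm : k + 1 < m) (ε : ℂ)
    (x y z t : ℂ)
    (h0 : x^2 + (t+z)*y^2 + (t-z)*z^2 - (t^2 - z^2)*t^(2*k) + ε*t^(2*m) = 0)
    (hx : 2*x = 0)
    (hy : 2*(t+z)*y = 0)
    (hz : y^2 + 2*t*z - 3*z^2 + 2*z*t^(2*k) = 0)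
    (ht : y^2 + z^2 - (2*(k:ℂ)+2)*t^(2*k+1) + 2*(k:ℂ)*z^2*t^(2*k-1)
            + 2*(m:ℂ)*ε*t^(2*m-1) = 0)
    (hzt : z + t = 0) :
    t = 0 ∧ z = 0 ∧ y = 0 ∧ x = 0 := by
  obtain ⟨k', rfl⟩ : ∃ k', k = k' + 1 := ⟨k - 1, by omega⟩
  obtain ⟨m', rfl⟩ : ∃ m', m = k' + m' + 3 := ⟨m - k' - 3, by omega⟩
  have hx0 : x = 0 := by linear_combination hx / 2
  have hz0 : z = -t := by linear_combination hzt
  subst hx0 hz0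
  push_cast at ht
  rw [show 2*(k'+1)-1 = 2*k'+1 from by omega,
    show 2*(k'+m'+3)-1 = 2*k'+2*m'+5 from by omega] at ht
  have key : ((4:ℂ)*(k'+m'+3) - 6) * t^3 = 0 := by
    linear_combination 2*((k':ℂ)+m'+3)*h0 + t*hz - t*ht
  have hne : ((4:ℂ)*(k'+m'+3) - 6) ≠ 0 := by
    have : ((4*(k'+m'+3) - 6 : ℕ) : ℂ) ≠ 0 := Nat.cast_ne_zero.2 (by omega)
    push_cast [show 6 ≤ 4*(k'+m'+3) by omega] at this
    intro h; apply this; linear_combination h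
  have ht0 : t = 0 := by
    have := mul_eq_zero.1 key
    rcases this with h | h
    · exact absurd h hne
    · exact pow_eq_zero_iff (n := 3) (by norm_num) |>.1 h
  subst ht0
  have hy0 : y = 0 := by
    have : y^2 = 0 := by linear_combination hz
    exact pow_eq_zero_iff (n := 2) (by norm_num) |>.1 this
  simp [hy0]
end

section
/- The cubic curve in ℙ² defined by C(y,z,t) = z(y + b₂t)² - 2b₂t(y + b₂t)(z - t) - (z + b₁t)(z - t)² is irreducible provided b₁ + 2b₂ ≠ 0 and b₁ - 2b₂ ≠ 0, and it has a singular point at (y : z : t) = (-b₂ : 1 : 1). -/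
/-!
Viewed as a polynomial in `y` over the UFD `ℂ[z, t]`, the cubic is the quadratic
`z y² + 2 b₂ t² y + c(z, t)`. A factorization of a quadratic over a domain either has a constant
factor, which divides all three coefficients, or is a product of two linear factors, which makes
the discriminant a square. Here the coefficients have no common factor (the only candidate is `z`,
and `z ∣ c` would force `b₁ = b₂ = 0`), and the discriminant
`4 (z - t)² (z² + b₁ z t + b₂² t²)` is not a square since `z² + b₁ z t + b₂² t²` is not one
when `b₁² ≠ 4 b₂²`. The singularity at `(-b₂ : 1 : 1)` is a direct computation.
-/

open MvPolynomial

namespace Polynomial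

variable {R : Type*} [CommRing R]

theorem discrim_eq_sq_of_quadratic_eq_mul {a b c p q r s : R}
    (h : C a * X ^ 2 + C b * X + C c = (C p * X + C q) * (C r * X + C s)) :
    discrim a b c = (p * s - q * r) ^ 2 := by
  replace h : C a * X ^ 2 + C b * X + C c =
      C (p * r) * X ^ 2 + C (p * s + q * r) * X + C (q * s) :=
    h.trans (by simp only [C_mul, C_add]; ring)
  have h₂ : a = p * r := by simpa [-map_mul] using congrArg (coeff · 2) h
  have h₁ : b = p * s + q * r := by simpa [-map_mul] using congrArg (coeff · 1) h
  have h₀ : c = q * s := by simpa [-map_mul] using congrArg (coeff · 0) h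
  rw [discrim, h₂, h₁, h₀]
  ring

variable [IsDomain R]

theorem irreducible_quadratic_of_not_isSquare_discrim {a b c : R} (ha : a ≠ 0)
    (hprim : (C a * X ^ 2 + C b * X + C c).IsPrimitive) (hdisc : ¬IsSquare (discrim a b c)) :
    Irreducible (C a * X ^ 2 + C b * X + C c) := by
  have hdeg := natDegree_quadratic (b := b) (c := c) ha
  refine ⟨fun hu => by simp [natDegree_eq_zero_of_isUnit hu] at hdeg, fun f g hfg => ?_⟩
  wlog hle : f.natDegree ≤ g.natDegree generalizing f g
  · exact (this g f (hfg.trans (mul_comm f g)) (le_of_not_ge hle)).symm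
  have hP0 : C a * X ^ 2 + C b * X + C c ≠ 0 := fun h => by simp [h] at hdeg
  have hsum : f.natDegree + g.natDegree = 2 := by
    rw [← natDegree_mul (left_ne_zero_of_mul (hfg ▸ hP0)) (right_ne_zero_of_mul (hfg ▸ hP0)),
      ← hfg, hdeg]
  obtain hf | ⟨hf, hg⟩ : f.natDegree = 0 ∨ f.natDegree = 1 ∧ g.natDegree = 1 := by omega
  · left
    rw [eq_C_of_natDegree_eq_zero hf] at hfg ⊢
    exact isUnit_C.mpr (hprim _ (hfg ▸ dvd_mul_right _ _))
  · obtain ⟨p, q, rfl⟩ := exists_eq_X_add_C_of_natDegree_le_one hf.le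
    obtain ⟨r, s, rfl⟩ := exists_eq_X_add_C_of_natDegree_le_one hg.le
    exact absurd ⟨_, (discrim_eq_sq_of_quadratic_eq_mul hfg).trans (sq _)⟩ hdisc

theorem discrim_eq_zero_of_isSquare_quadratic {a b c : R}
    (h : IsSquare (C a * X ^ 2 + C b * X + C c)) : discrim a b c = 0 := by
  obtain ⟨p, hp⟩ := h
  have hdeg : p.natDegree ≤ 1 := by
    have := natDegree_quadratic_le (a := a) (b := b) (c := c)
    rw [hp, ← sq, natDegree_pow] at this
    omega
  obtain ⟨u, v, rfl⟩ := exists_eq_X_add_C_of_natDegree_le_one hdeg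
  simpa [mul_comm] using discrim_eq_sq_of_quadratic_eq_mul hp

end Polynomial

theorem IsIntegrallyClosed.isSquare_of_isSquare_sq_mul {R : Type*} [CommRing R] [IsDomain R]
    [IsIntegrallyClosed R] {u q : R} (hu : u ≠ 0) (h : IsSquare (u ^ 2 * q)) : IsSquare q := by
  obtain ⟨w, hw⟩ := h
  obtain ⟨v, rfl⟩ : u ∣ w := (pow_dvd_pow_iff two_ne_zero).mp ⟨q, by rw [hw, sq]⟩
  exact ⟨v, mul_left_cancel₀ (pow_ne_zero 2 hu) (by rw [hw]; ring)⟩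

section SingularCubic

variable (b₁ b₂ : ℂ)

/-- With `z = X 0` and `t = X 1`, the cubic is `z y² + 2 b₂ t² y + cubicConstCoeff b₁ b₂` as a
polynomial in `y`. -/
noncomputable def cubicConstCoeff : MvPolynomial (Fin 2) ℂ :=
  C b₂ ^ 2 * X 1 ^ 2 * (2 * X 1 - X 0) - (X 0 + C b₁ * X 1) * (X 0 - X 1) ^ 2

theorem finSuccEquiv_cubic :
    finSuccEquiv ℂ 2 (X 1 * (X 0 + C b₂ * X 2) ^ 2
      - 2 * C b₂ * X 2 * (X 0 + C b₂ * X 2) * (X 1 - X 2) - (X 1 + C b₁ * X 2) * (X 1 - X 2) ^ 2) =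
    Polynomial.C (X 0) * Polynomial.X ^ 2 + Polynomial.C (2 * C b₂ * X 1 ^ 2) * Polynomial.X
      + Polynomial.C (cubicConstCoeff b₁ b₂) := by
  have hX₁ : (1 : Fin 3) = Fin.succ 0 := rfl
  have hX₂ : (2 : Fin 3) = Fin.succ 1 := rfl
  have hC (b : ℂ) : finSuccEquiv ℂ 2 (C b) = Polynomial.C (C b) := by simp [finSuccEquiv_apply]
  simp only [hX₁, hX₂, hC, cubicConstCoeff, map_sub, map_mul, map_add, map_pow, map_ofNat,
    finSuccEquiv_X_zero, finSuccEquiv_X_succ]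
  ring

theorem discrim_cubic :
    discrim (X 0) (2 * C b₂ * X 1 ^ 2) (cubicConstCoeff b₁ b₂) =
      (2 * (X 0 - X 1)) ^ 2 * (X 0 ^ 2 + C b₁ * X 0 * X 1 + C b₂ ^ 2 * X 1 ^ 2) := by
  rw [discrim, cubicConstCoeff]
  ring

theorem isPrimitive_cubic (h : b₁ + 2 * b₂ ≠ 0) :
    (Polynomial.C (X 0) * Polynomial.X ^ 2 + Polynomial.C (2 * C b₂ * X 1 ^ 2) * Polynomial.X
      + Polynomial.C (cubicConstCoeff b₁ b₂)).IsPrimitive := by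
  refine Polynomial.isPrimitive_iff_isUnit_of_C_dvd.mpr fun r hr => ?_
  have hcoeff (i : ℕ) := (Polynomial.C_dvd_iff_dvd_coeff r _).mp hr i
  simp only [Polynomial.coeff_add, Polynomial.coeff_C_mul_X_pow, Polynomial.coeff_C_mul_X,
    Polynomial.coeff_C] at hcoeff
  have h₂ : r ∣ X 0 := by simpa using hcoeff 2
  have h₁ : r ∣ 2 * C b₂ * X 1 ^ 2 := by simpa using hcoeff 1
  have h₀ : r ∣ cubicConstCoeff b₁ b₂ := by simpa using hcoeff 0
  refine ((X_prime (R := ℂ) (σ := Fin 2) (i := 0)).irreducible.dvd_iff.mp h₂).resolve_right ?_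
  intro hassoc
  have hvanish (f : MvPolynomial (Fin 2) ℂ) (hf : r ∣ f) : eval ![0, 1] f = 0 := by
    simpa using map_dvd (eval ![(0 : ℂ), 1]) (hassoc.dvd.trans hf)
  have e₁ : b₂ = 0 := by simpa using hvanish _ h₁
  have e₀ : b₂ ^ 2 * 2 - b₁ = 0 := by simpa [cubicConstCoeff] using hvanish _ h₀
  exact h (by linear_combination (2 * b₂ + 2) * e₁ - e₀)

theorem not_isSquare_discrim_cubic (h₁ : b₁ + 2 * b₂ ≠ 0) (h₂ : b₁ - 2 * b₂ ≠ 0) :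
    ¬IsSquare (discrim (X 0) (2 * C b₂ * X 1 ^ 2) (cubicConstCoeff b₁ b₂)) := by
  intro hsq
  set φ : MvPolynomial (Fin 2) ℂ →ₐ[ℂ] Polynomial ℂ := aeval ![Polynomial.X, 1]
  have hφ : φ (discrim (X 0) (2 * C b₂ * X 1 ^ 2) (cubicConstCoeff b₁ b₂)) =
      (2 * (Polynomial.X - 1)) ^ 2 * (Polynomial.C 1 * Polynomial.X ^ 2
        + Polynomial.C b₁ * Polynomial.X + Polynomial.C (b₂ ^ 2)) := by
    simp [φ, discrim_cubic]
  have hne : (2 * (Polynomial.X - 1) : Polynomial ℂ) ≠ 0 := by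
    simpa using Polynomial.X_sub_C_ne_zero (1 : ℂ)
  have hdisc := Polynomial.discrim_eq_zero_of_isSquare_quadratic
    (IsIntegrallyClosed.isSquare_of_isSquare_sq_mul hne (hφ ▸ hsq.map φ))
  exact mul_ne_zero h₂ h₁ (by rw [discrim] at hdisc; linear_combination hdisc)

end SingularCubic

/-- The cubic
`C = z(y + b₂t)² - 2b₂t(y + b₂t)(z - t) - (z + b₁t)(z - t)²` in `ℂ[y,z,t]`
is irreducible provided `b₁ + 2b₂ ≠ 0` and `b₁ - 2b₂ ≠ 0`, and has a singular
point at `(y : z : t) = (-b₂ : 1 : 1)`. -/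
theorem stmt13 (b₁ b₂ : ℂ) (h₁ : b₁ + 2*b₂ ≠ 0) (h₂ : b₁ - 2*b₂ ≠ 0) :
    let y : MvPolynomial (Fin 3) ℂ := X 0
    let z : MvPolynomial (Fin 3) ℂ := X 1
    let t : MvPolynomial (Fin 3) ℂ := X 2
    let Cb : MvPolynomial (Fin 3) ℂ :=
      z*(y + C b₂*t)^2 - 2*C b₂*t*(y + C b₂*t)*(z - t) - (z + C b₁*t)*(z - t)^2
    let p : Fin 3 → ℂ := ![-b₂, 1, 1]
    Irreducible Cb ∧ eval p Cb = 0 ∧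
      eval p (pderiv 0 Cb) = 0 ∧ eval p (pderiv 1 Cb) = 0 ∧
      eval p (pderiv 2 Cb) = 0 := by
  intro y z t Cb p
  refine ⟨?_, ?_, ?_, ?_, ?_⟩
  · rw [← MulEquiv.irreducible_iff (finSuccEquiv ℂ 2).toMulEquiv]
    exact (finSuccEquiv_cubic b₁ b₂).symm ▸
      Polynomial.irreducible_quadratic_of_not_isSquare_discrim (X_ne_zero 0)
        (isPrimitive_cubic b₁ b₂ h₁) (not_isSquare_discrim_cubic b₁ b₂ h₁ h₂)
  all_goals simp [Cb, y, z, t, p]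
end
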